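/- Let n ≥ 3, let 0 < s < n be an integer, let C = τ₁·I_n + τ₂·J_n with τ₁ > 0 and τ₂ > 0 (I_n the identity and J_n the all-ones matrix), and let γ > 0. Then no optimal solution of the scaled linx problem lies in {0,1}^n; that is, for every x ∈ P(n,s) ∩ {0,1}^n, f(C,s;γ;x) < linx(C,s;γ). -/

import Mathlib

open Matrix Real Set

noncomputable section

/-- The feasible polytope `P(n,s)`. -/
def PP (n s : ℕ) : Set (Fin n → ℝ) :=
  {x | (∑ i, x i) = (s : ℝ) ∧ ∀ i, 0 ≤ x i ∧ x i ≤ 1}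

/-- The scaled linx objective `f(C,s;γ;x)`. -/
def fLinxScaled {n : ℕ} (C : Matrix (Fin n) (Fin n) ℝ) (s : ℕ) (γ : ℝ) (x : Fin n → ℝ) : ℝ :=
  (1 / 2) * (Real.log ((γ • (C * Matrix.diagonal x * C) + Matrix.diagonal fun i => 1 - x i).det)
    - (s : ℝ) * Real.log γ)

/-- The scaled linx bound `linx(C,s;γ)`. -/
def linxScaled (n s : ℕ) (C : Matrix (Fin n) (Fin n) ℝ) (γ : ℝ) : ℝ :=
  sSup (fLinxScaled C s γ '' PP n s)

/-!
Write `C = τ₁ (I + r J)` with `r = τ₂ / τ₁` and put `g = γ τ₁²`. Then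
`γ C Diag(y) C + Diag(e - y) = Diag(d) + U K Uᵀ` with `dᵢ = g yᵢ + 1 - yᵢ`, `U = [y e]` and a
`2 × 2` matrix `K`, so by the matrix determinant lemma the determinant is `∏ dᵢ` times a `2 × 2`
determinant in the moments `∑ yᵢ / dᵢ`, `∑ yᵢ² / dᵢ`, `∑ 1 / dᵢ`.

Let `x` be a feasible 0/1 point, `x_p = 1`, `x_q = 0`, and let `y` be `x` with both coordinates
moved to `1/2`; `y` is again feasible. Evaluating the moments at `x` and `y` gives
`4 g (det M(y) - det M(x)) = (∏ dᵢ(x)) (a² + (g + 1) r² ((s - 1) + g (n - s - 1)))` with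
`a = (g - 1)(1 + r (s - 1)) + 2 g r`, which is positive because `s - 1` and `n - s - 1` are
nonnegative and, as `n ≥ 3`, not both zero.
-/

open Finset Function

section Update

variable {ι α M : Type*} [Fintype ι]

@[to_additive]
lemma prod_apply_update_mul [DecidableEq ι] [CommMonoid M] (φ : α → M) (f : ι → α) (i : ι)
    (b : α) : (∏ j, φ (update f i b j)) * φ (f i) = (∏ j, φ (f j)) * φ b := by
  rw [prod_eq_mul_prod_sdiff_singleton_of_mem (mem_univ i) fun j => φ (update f i b j),
    prod_eq_mul_prod_sdiff_singleton_of_mem (mem_univ i) fun j => φ (f j), update_self,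
    prod_congr rfl fun j hj => by rw [update_of_ne (by simpa using hj)]]
  ac_rfl

lemma sum_apply_of_zero_one (φ : ℝ → ℝ) {x : ι → ℝ} (hx : ∀ i, x i = 0 ∨ x i = 1) :
    ∑ i, φ (x i) = (∑ i, x i) * φ 1 + (Fintype.card ι - ∑ i, x i) * φ 0 := by
  have h : ∀ i, φ (x i) = x i * φ 1 + (1 - x i) * φ 0 := fun i => by
    rcases hx i with h | h <;> simp [h]
  simp only [h, sum_add_distrib, ← sum_mul, sum_sub_distrib, sum_const, card_univ, nsmul_one]

variable [DecidableEq ι] {x : ι → ℝ} {p q : ι}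

lemma sum_apply_update_half (φ : ℝ → ℝ) (hx : ∀ i, x i = 0 ∨ x i = 1) (hp : x p = 1)
    (hq : x q = 0) :
    ∑ i, φ (update (update x p (1 / 2)) q (1 / 2) i) =
      (∑ i, x i - 1) * φ 1 + (Fintype.card ι - ∑ i, x i - 1) * φ 0 + 2 * φ (1 / 2) := by
  have hqp : q ≠ p := fun h => by simp [h, hp] at hq
  have hq' := sum_apply_update_add φ (update x p (1 / 2)) q (1 / 2)
  have hp' := sum_apply_update_add φ x p (1 / 2)
  rw [update_of_ne hqp, hq] at hq'
  rw [sum_apply_of_zero_one φ hx, hp] at hp'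
  linarith

lemma prod_apply_update_half (φ : ℝ → ℝ) (hp : x p = 1) (hq : x q = 0) :
    (∏ i, φ (update (update x p (1 / 2)) q (1 / 2) i)) * φ 0 * φ 1 =
      (∏ i, φ (x i)) * φ (1 / 2) ^ 2 := by
  have hqp : q ≠ p := fun h => by simp [h, hp] at hq
  have hq' := prod_apply_update_mul φ (update x p (1 / 2)) q (1 / 2)
  have hp' := prod_apply_update_mul φ x p (1 / 2)
  rw [update_of_ne hqp, hq] at hq'
  rw [hp] at hp'
  rw [hq', mul_assoc, mul_comm (φ _), ← mul_assoc, hp']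
  ring

end Update

section LinxMatrix

variable {ι : Type*} [Fintype ι] [DecidableEq ι]

def linxMatrix (g r : ℝ) (y : ι → ℝ) : Matrix ι ι ℝ :=
  g • ((1 + r • of fun _ _ => 1) * diagonal y * (1 + r • of fun _ _ => 1)) +
    diagonal fun i => 1 - y i

lemma linxMatrix_rescale (γ : ℝ) {τ₁ : ℝ} (hτ₁ : τ₁ ≠ 0) (τ₂ : ℝ) (y : ι → ℝ) :
    linxMatrix (γ * τ₁ ^ 2) (τ₂ / τ₁) y =
      γ • ((τ₁ • (1 : Matrix ι ι ℝ) + τ₂ • of fun _ _ => 1) * diagonal y *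
        (τ₁ • (1 : Matrix ι ι ℝ) + τ₂ • of fun _ _ => 1)) + diagonal fun i => 1 - y i := by
  have hC : τ₁ • (1 : Matrix ι ι ℝ) + τ₂ • of (fun _ _ => 1) =
      τ₁ • (1 + (τ₂ / τ₁) • of fun _ _ => 1) := by
    rw [smul_add, smul_smul, mul_div_cancel₀ _ hτ₁]
  rw [hC, linxMatrix, Matrix.smul_mul, Matrix.smul_mul, Matrix.mul_smul, smul_smul, smul_smul]
  ring_nf

lemma linxMatrix_eq_diagonal_add (g r : ℝ) (y : ι → ℝ) :
    linxMatrix g r y = diagonal (fun i => g * y i + 1 - y i) +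
      of (fun i => ![y i, 1]) *
        (!![0, g * r; g * r, g * r ^ 2 * ∑ i, y i] * (of fun i => ![y i, 1])ᵀ) := by
  ext i j
  simp only [linxMatrix, smul_of, add_mul, one_mul, mul_add, mul_one, smul_add, Matrix.add_apply,
    Matrix.smul_apply, diagonal_apply, smul_eq_mul, mul_ite, mul_zero, Matrix.mul_apply, of_apply,
    Pi.smul_apply, sum_ite_eq', Finset.mem_univ, ↓reduceIte, ite_mul, zero_mul, sum_ite_eq,
    ← sum_mul, ← mul_sum, cons_mul, Matrix.empty_mul, Equiv.symm_apply_apply, cons_val', vecMul,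
    dotProduct, transpose_apply, Fin.sum_univ_two, cons_val_zero, cons_val_one, cons_val_fin_one,
    zero_add]
  split_ifs <;> ring

lemma transpose_mul_diagonal_mul_of_vec_one (d y : ι → ℝ) :
    (of fun i => ![y i, 1])ᵀ * diagonal d * of (fun i => ![y i, 1]) =
      !![∑ i, d i * y i ^ 2, ∑ i, d i * y i; ∑ i, d i * y i, ∑ i, d i] := by
  ext a b
  fin_cases a <;> fin_cases b <;>
    simp [Matrix.mul_apply, diagonal_apply, sq, mul_comm, mul_left_comm]

lemma det_linxMatrix (g r : ℝ) (y : ι → ℝ) (hd : ∀ i, g * y i + 1 - y i ≠ 0) :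
    (linxMatrix g r y).det = (∏ i, (g * y i + 1 - y i)) *
      ((1 + g * r * ∑ i, y i / (g * y i + 1 - y i)) ^ 2 +
        g * r ^ 2 * (∑ i, 1 / (g * y i + 1 - y i)) *
          (∑ i, y i - g * ∑ i, y i ^ 2 / (g * y i + 1 - y i))) := by
  have hD : IsUnit (diagonal fun i => g * y i + 1 - y i).det := by
    simpa [det_diagonal, isUnit_iff_ne_zero, prod_ne_zero_iff] using hd
  have hinv : (diagonal fun i => g * y i + 1 - y i)⁻¹ = diagonal fun i => (g * y i + 1 - y i)⁻¹ :=
    inv_eq_left_inv <| by simp [diagonal_mul_diagonal, hd]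
  rw [linxMatrix_eq_diagonal_add, det_add_mul _ _ hD, det_diagonal, hinv, Matrix.mul_assoc,
    Matrix.mul_assoc, ← Matrix.mul_assoc _ (diagonal _), transpose_mul_diagonal_mul_of_vec_one]
  congr 1
  rw [one_fin_two, mul_fin_two, det_fin_two]
  simp only [Matrix.add_apply, of_apply, cons_val_zero, cons_val_one, cons_val_fin_one,
    div_eq_inv_mul, mul_one]
  ring

end LinxMatrix

section Vertex

variable {ι : Type*} [Fintype ι] [DecidableEq ι] {g r : ℝ} {x : ι → ℝ} {p q : ι}

lemma mul_add_one_sub_pos (hg : 0 < g) {t : ℝ} (ht₀ : 0 ≤ t) (ht₁ : t ≤ 1) :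
    0 < g * t + 1 - t := by
  nlinarith [mul_nonneg hg.le ht₀]

lemma det_linxMatrix_of_zero_one (hg : 0 < g) (hx : ∀ i, x i = 0 ∨ x i = 1) :
    (linxMatrix g r x).det = (∏ i, (g * x i + 1 - x i)) * (1 + r * ∑ i, x i) ^ 2 := by
  have hg0 := hg.ne'
  have hd : ∀ i, g * x i + 1 - x i ≠ 0 := fun i => by rcases hx i with h | h <;> simp [h, hg0]
  rw [det_linxMatrix g r x hd, sum_apply_of_zero_one (fun t => t / (g * t + 1 - t)) hx,
    sum_apply_of_zero_one (fun t => t ^ 2 / (g * t + 1 - t)) hx,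
    sum_apply_of_zero_one (fun t => 1 / (g * t + 1 - t)) hx]
  simp only [mul_zero, mul_one, zero_add, sub_zero, add_sub_cancel_right]
  field_simp
  ring

lemma det_linxMatrix_update_half (hg : 0 < g) (hx : ∀ i, x i = 0 ∨ x i = 1) (hp : x p = 1)
    (hq : x q = 0) :
    4 * g * (linxMatrix g r (update (update x p (1 / 2)) q (1 / 2))).det =
      (∏ i, (g * x i + 1 - x i)) * (((g + 1) * (1 + r * (∑ i, x i - 1)) + 2 * g * r) ^ 2 +
        (g + 1) * r ^ 2 * ((∑ i, x i - 1) + g * (Fintype.card ι - ∑ i, x i - 1)) +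
          4 * g * r ^ 2) := by
  have hg0 := hg.ne'
  have hd_half : g * (1 / 2) + 1 - 1 / 2 = (g + 1) / 2 := by ring
  have hprod := prod_apply_update_half (fun t => g * t + 1 - t) hp hq
  simp only [mul_zero, mul_one, zero_add, sub_zero, add_sub_cancel_right, hd_half] at hprod
  have hPy := eq_div_of_mul_eq hg0 hprod
  rw [det_linxMatrix g r _ fun i => ?_, hPy, sum_apply_update_half (fun t => t) hx hp hq,
    sum_apply_update_half (fun t => t / (g * t + 1 - t)) hx hp hq,
    sum_apply_update_half (fun t => t ^ 2 / (g * t + 1 - t)) hx hp hq,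
    sum_apply_update_half (fun t => 1 / (g * t + 1 - t)) hx hp hq]
  · simp only [mul_zero, mul_one, zero_add, sub_zero, add_sub_cancel_right, hd_half]
    field_simp
    ring
  · refine (mul_add_one_sub_pos hg ?_ ?_).ne' <;> simp only [update_apply] <;> split_ifs <;>
      rcases hx i with h | h <;> norm_num [h]

lemma det_linxMatrix_lt_update_half (hg : 0 < g) (hr : 0 < r) (hx : ∀ i, x i = 0 ∨ x i = 1)
    (hp : x p = 1) (hq : x q = 0) (hι : 3 ≤ Fintype.card ι) :
    0 < (linxMatrix g r x).det ∧
      (linxMatrix g r x).det < (linxMatrix g r (update (update x p (1 / 2)) q (1 / 2))).det := by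
  have hx₀₁ : ∀ i, 0 ≤ x i ∧ x i ≤ 1 := fun i => by rcases hx i with h | h <;> simp [h]
  have hP : 0 < ∏ i, (g * x i + 1 - x i) :=
    prod_pos fun i _ => mul_add_one_sub_pos hg (hx₀₁ i).1 (hx₀₁ i).2
  have hσ : 1 ≤ ∑ i, x i := hp ▸ single_le_sum (fun i _ => (hx₀₁ i).1) (mem_univ p)
  have hσN : 1 - x q ≤ ∑ i, (1 - x i) :=
    single_le_sum (fun i _ => sub_nonneg.2 (hx₀₁ i).2) (mem_univ q)
  rw [hq, sub_zero, sum_sub_distrib, sum_const, card_univ, nsmul_one] at hσN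
  have hN : (3 : ℝ) ≤ Fintype.card ι := by exact_mod_cast hι
  have hmix : 0 < (∑ i, x i - 1) + g * (Fintype.card ι - ∑ i, x i - 1) := by
    rcases (sub_nonneg.2 hσ).eq_or_lt with h | h
    · nlinarith
    · nlinarith [mul_nonneg hg.le (by linarith : (0 : ℝ) ≤ Fintype.card ι - ∑ i, x i - 1)]
  rw [det_linxMatrix_of_zero_one hg hx]
  refine ⟨by positivity, lt_of_mul_lt_mul_left ?_ (by positivity : (0 : ℝ) ≤ 4 * g)⟩
  rw [det_linxMatrix_update_half hg hx hp hq]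
  have hsq := sq_nonneg ((g - 1) * (1 + r * (∑ i, x i - 1)) + 2 * g * r)
  have hpos : 0 < (g + 1) * r ^ 2 * ((∑ i, x i - 1) + g * (Fintype.card ι - ∑ i, x i - 1)) := by
    positivity
  nlinarith [mul_pos hP hpos, mul_nonneg hP.le hsq]

end Vertex

section Feasible

variable {ι : Type*} [Fintype ι] {x : ι → ℝ}

lemma exists_eq_one_of_zero_one (hx : ∀ i, x i = 0 ∨ x i = 1) (hσ : 0 < ∑ i, x i) :
    ∃ p, x p = 1 := by
  obtain ⟨p, -, hp⟩ := exists_ne_zero_of_sum_ne_zero hσ.ne'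
  exact ⟨p, (hx p).resolve_left hp⟩

lemma exists_eq_zero_of_zero_one (hx : ∀ i, x i = 0 ∨ x i = 1)
    (hσ : ∑ i, x i < Fintype.card ι) : ∃ q, x q = 0 := by
  obtain ⟨q, -, hq⟩ := exists_ne_zero_of_sum_ne_zero (f := fun i => 1 - x i) <| by
    rw [sum_sub_distrib, sum_const, card_univ, nsmul_one]
    exact sub_ne_zero.2 hσ.ne'
  exact ⟨q, (hx q).resolve_right fun h => hq (by simp [h])⟩

end Feasible

lemma update_half_mem_PP {n s : ℕ} {x : Fin n → ℝ} (hx : x ∈ PP n s)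
    (hx01 : ∀ i, x i = 0 ∨ x i = 1) {p q : Fin n} (hp : x p = 1) (hq : x q = 0) :
    update (update x p (1 / 2)) q (1 / 2) ∈ PP n s := by
  refine ⟨?_, fun i => ?_⟩
  · rw [sum_apply_update_half (fun t => t) hx01 hp hq, hx.1]
    ring
  · simp only [update_apply]
    split_ifs <;> norm_num [hx.2 i]

lemma isCompact_PP (n s : ℕ) : IsCompact (PP n s) := by
  have : PP n s = Set.Icc 0 1 ∩ {x : Fin n → ℝ | ∑ i, x i = s} := by
    ext x
    simp [PP, Pi.le_def, forall_and, and_comm]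
  rw [this]
  exact isCompact_Icc.inter_right (isClosed_eq (by fun_prop) continuous_const)

lemma bddAbove_fLinxScaled_image (n s : ℕ) (C : Matrix (Fin n) (Fin n) ℝ) (γ : ℝ) :
    BddAbove (fLinxScaled C s γ '' PP n s) := by
  have hcont : Continuous fun x : Fin n → ℝ =>
      |(γ • (C * diagonal x * C) + diagonal fun i => 1 - x i).det| := by
    fun_prop
  obtain ⟨K, hK⟩ := ((isCompact_PP n s).image hcont).bddAbove
  refine ⟨(K - s * log γ) / 2, ?_⟩
  rintro _ ⟨x, hx, rfl⟩
  have hlog := (log_abs _).symm.le.trans (log_le_self (abs_nonneg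
    (γ • (C * diagonal x * C) + diagonal fun i => 1 - x i).det))
  have := hK (mem_image_of_mem _ hx)
  unfold fLinxScaled
  linarith

lemma fLinxScaled_lt_of_det_lt {n s : ℕ} {C : Matrix (Fin n) (Fin n) ℝ} {γ : ℝ}
    {x y : Fin n → ℝ} (hx : 0 < (γ • (C * diagonal x * C) + diagonal fun i => 1 - x i).det)
    (hxy : (γ • (C * diagonal x * C) + diagonal fun i => 1 - x i).det <
      (γ • (C * diagonal y * C) + diagonal fun i => 1 - y i).det) :
    fLinxScaled C s γ x < fLinxScaled C s γ y := by
  have := log_lt_log hx hxy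
  unfold fLinxScaled
  linarith

theorem stmt_14 (n s : ℕ) (hn : 3 ≤ n) (hs : 0 < s) (hsn : s < n)
    (τ₁ τ₂ : ℝ) (hτ₁ : 0 < τ₁) (hτ₂ : 0 < τ₂)
    (C : Matrix (Fin n) (Fin n) ℝ)
    (hC : C = τ₁ • (1 : Matrix (Fin n) (Fin n) ℝ) + τ₂ • Matrix.of (fun _ _ => (1 : ℝ)))
    (γ : ℝ) (hγ : 0 < γ) :
    ∀ x ∈ PP n s, (∀ i, x i = 0 ∨ x i = 1) →
      fLinxScaled C s γ x < linxScaled n s C γ := by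
  subst hC
  intro x hx hx01
  obtain ⟨p, hp⟩ := exists_eq_one_of_zero_one hx01 (by rw [hx.1]; exact_mod_cast hs)
  obtain ⟨q, hq⟩ := exists_eq_zero_of_zero_one hx01 <| by
    rw [hx.1, Fintype.card_fin]; exact_mod_cast hsn
  obtain ⟨hpos, hlt⟩ := det_linxMatrix_lt_update_half (r := τ₂ / τ₁)
    (by positivity : 0 < γ * τ₁ ^ 2) (by positivity) hx01 hp hq (by simpa using hn)
  simp only [linxMatrix_rescale γ hτ₁.ne'] at hpos hlt
  exact (fLinxScaled_lt_of_det_lt hpos hlt).trans_le <| le_csSup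
    (bddAbove_fLinxScaled_image n s _ γ) (mem_image_of_mem _ (update_half_mem_PP hx hx01 hp hq))
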